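/- arXiv:2505.10606 — 3 statements merged into one kernel-verified Lean document; each statement's English description precedes it below -/
import Mathlib

section
/- Let Σ be a finite alphabet, let T be a compact decoder-only Transformer over Σ, and let α, α̂ ∈ Σ^ω be infinite sequences that differ in only finitely many positions. Then T eventually learns α if and only if T eventually learns α̂. -/
open Finset Filter

open Classical in
/-- Relative Hamming distance between two finite sequences. -/
noncomputable def relHamming {A : Type*} {n : ℕ} (α β : Fin n → A) : ℝ :=
  ((Finset.univ.filter (fun i => α i ≠ β i)).card : ℝ) / n

/-- Relative Hamming distance between two infinite sequences (1-indexed: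
position `n ≥ 1` of the sequence `α : ℕ → A` is `α n`). -/
noncomputable def relHammingInf {A : Type*} (α β : ℕ → A) : ℝ :=
  Filter.liminf
    (fun n : ℕ => relHamming (fun i : Fin n => α (i.val + 1)) (fun i : Fin n => β (i.val + 1)))
    Filter.atTop

/-- A `d`-dimensional decoder-only attention layer. -/
structure AttentionLayer (d : ℕ) where
  p : ℕ → ℕ → (Fin d → ℝ)
  val : (Fin d → ℝ) → (Fin d → ℝ)
  w : (Fin d → ℝ) → (Fin d → ℝ) → (Fin d → ℝ) → ℝ
  F : (Fin d → ℝ) → (Fin d → ℝ) → (Fin d → ℝ)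
  w_pos : ∀ x y z, 0 < w x y z
  val_cont : Continuous val
  w_cont : Continuous fun t : (Fin d → ℝ) × (Fin d → ℝ) × (Fin d → ℝ) => w t.1 t.2.1 t.2.2
  F_cont : Continuous fun t : (Fin d → ℝ) × (Fin d → ℝ) => F t.1 t.2

/-- A positional encoding is compact if its range is contained in a compact set. -/
def AttentionLayer.CompactPE {d : ℕ} (L : AttentionLayer d) : Prop :=
  ∃ K : Set (Fin d → ℝ), IsCompact K ∧ ∀ i j : ℕ, L.p i j ∈ K

/-- The `j`-th attention vector computed by the layer on input `x`. -/
noncomputable def AttentionLayer.attn {d : ℕ} (L : AttentionLayer d) {n : ℕ}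
    (x : Fin n → (Fin d → ℝ)) (j : Fin n) : Fin d → ℝ :=
  (∑ i ∈ Finset.Iic j, L.w (x i) (x j) (L.p i.val j.val))⁻¹ •
    ∑ i ∈ Finset.Iic j, L.w (x i) (x j) (L.p i.val j.val) • L.val (x i)

/-- The output sequence of the layer on input `x`. -/
noncomputable def AttentionLayer.apply {d : ℕ} (L : AttentionLayer d) {n : ℕ}
    (x : Fin n → (Fin d → ℝ)) : Fin n → (Fin d → ℝ) :=
  fun j => L.F (L.attn x j) (x j)

/-- `sim(x, x̂)`: the minimal `δ ≥ 0` such that `‖x_i − x̂_i‖ ≤ δ` for at least `(1−δ)n`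
indices `i`. -/
noncomputable def simDist {d n : ℕ} (x y : Fin n → (Fin d → ℝ)) : ℝ :=
  sInf {δ : ℝ | 0 ≤ δ ∧
    (1 - δ) * n ≤ ((Finset.univ.filter (fun i => ‖x i - y i‖ ≤ δ)).card : ℝ)}

/-- Sequential application of a list of attention layers. -/
noncomputable def applyLayers {d : ℕ} (Ls : List (AttentionLayer d)) {n : ℕ}
    (x : Fin n → (Fin d → ℝ)) : Fin n → (Fin d → ℝ) :=
  Ls.foldl (fun v L => L.apply v) x

/-- A decoder-only Transformer over a finite alphabet `A`. -/
structure Transformer (A : Type*) [Fintype A] (d : ℕ) where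
  embed : A → ℕ → (Fin d → ℝ)
  layers : List (AttentionLayer d)
  proj : (Fin d → ℝ) → (A → ℝ)
  proj_cont : Continuous proj
  proj_nonneg : ∀ y a, 0 ≤ proj y a
  proj_sum : ∀ y, ∑ a, proj y a = 1

/-- The output probability distribution (as a vector in `ℝ^A`) of the Transformer on a
nonempty input sequence. -/
noncomputable def Transformer.eval {A : Type*} [Fintype A] {d : ℕ} (T : Transformer A d)
    {n : ℕ} (α : Fin (n + 1) → A) : A → ℝ :=
  T.proj (applyLayers T.layers (fun j => T.embed (α j) j.val) (Fin.last n))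

/-- A Transformer is compact if its input embedding has range in a compact set and all of
its layers have compact positional encoding. -/
def Transformer.IsCompactT {A : Type*} [Fintype A] {d : ℕ} (T : Transformer A d) : Prop :=
  (∃ K : Set (Fin d → ℝ), IsCompact K ∧ ∀ (a : A) (i : ℕ), T.embed a i ∈ K) ∧
  ∀ L ∈ T.layers, L.CompactPE

/-- `T` eventually learns the infinite sequence `α` (1-indexed: position `n ≥ 1` is `α n`). -/
def EventuallyLearns {A : Type*} [Fintype A] {d : ℕ} (T : Transformer A d) (α : ℕ → A) :
    Prop :=
  ∃ ε : ℝ, 0 < ε ∧ ∃ n₀ : ℕ, ∀ n ≥ n₀, ∀ σ : A, σ ≠ α (n + 2) →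
    T.eval (fun i : Fin (n + 1) => α (i.val + 1)) σ + ε ≤
      T.eval (fun i : Fin (n + 1) => α (i.val + 1)) (α (n + 2))

/-!
Decoder-only attention is causal, so a compact Transformer acts on infinite sequences of
embeddings, its output on a prefix of length `n + 1` being the `n`-th entry. Compactness makes
every continuous map involved uniformly continuous on the relevant compact sets, and bounds the
attention weights below by some `c > 0`. If two input sequences are asymptotically equal, the
`j`-th attention vectors then differ by at most `(1 + D) / c` times a Cesàro mean of terms that
are small once both indices are large (`D` bounds the values); so each layer, and the whole Transformer, maps asymptotically
equal inputs to asymptotically equal output distributions. Sequences that differ in finitely many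
places have asymptotically equal embeddings, and a prediction margin `ε` for one of them gives a
margin `ε / 3` for the other.
-/

open Filter Topology Metric Uniformity

section Analysis

variable {ι E F : Type*} [SeminormedAddCommGroup E] [SeminormedAddCommGroup F]

theorem UniformContinuousOn.tendsto_sub_zero {f : E → F} {K : Set E}
    (hf : UniformContinuousOn f K) {l : Filter ι} {x x' : ι → E}
    (hx : ∀ i, x i ∈ K) (hx' : ∀ i, x' i ∈ K) (h : Tendsto (fun i => x i - x' i) l (𝓝 0)) :
    Tendsto (fun i => f (x i) - f (x' i)) l (𝓝 0) := by
  have hxx' : Tendsto (fun i => (x i, x' i)) l (𝓤 E ⊓ 𝓟 (K ×ˢ K)) := by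
    refine tendsto_inf.2 ⟨tendsto_uniformity_iff_dist_tendsto_zero.2 ?_,
      tendsto_principal.2 (Eventually.of_forall fun i => ⟨hx i, hx' i⟩)⟩
    simpa [dist_eq_norm] using h.norm
  refine tendsto_zero_iff_norm_tendsto_zero.2 ?_
  simpa [dist_eq_norm] using tendsto_uniformity_iff_dist_tendsto_zero.1 (Tendsto.comp hf hxx')

theorem Finset.norm_centerMass_sub_centerMass_le [NormedSpace ℝ E] (t : Finset ι)
    {w w' : ι → ℝ} {z z' : ι → E} {D : ℝ} (hw : 0 < ∑ i ∈ t, w i)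
    (hw'₀ : ∀ i ∈ t, 0 ≤ w' i) (hw' : 0 < ∑ i ∈ t, w' i) (hz' : ∀ i ∈ t, ‖z' i‖ ≤ D) :
    ‖t.centerMass w z - t.centerMass w' z'‖ ≤
      (∑ i ∈ t, (‖w i • z i - w' i • z' i‖ + |w i - w' i| * D)) / ∑ i ∈ t, w i := by
  set W := ∑ i ∈ t, w i
  set W' := ∑ i ∈ t, w' i
  set m' := t.centerMass w' z'
  have hm' : ‖m'‖ ≤ D := by
    simpa using (convex_closedBall (0 : E) D).centerMass_mem hw'₀ hw' (by simpa using hz')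
  have hWm' : W' • m' = ∑ i ∈ t, w' i • z' i := smul_inv_smul₀ hw'.ne' _
  -- the error of the total weight is charged to `m'`, whose norm is at most `D`
  have hsplit : t.centerMass w z - m' =
      W⁻¹ • ((∑ i ∈ t, w i • z i - ∑ i ∈ t, w' i • z' i) - (W - W') • m') := by
    rw [← hWm', sub_sub, ← add_smul, add_sub_cancel, smul_sub, inv_smul_smul₀ hw.ne']
    rfl
  rw [hsplit, norm_smul, Real.norm_of_nonneg (inv_nonneg.2 hw.le), inv_mul_eq_div]
  gcongr
  calc ‖(∑ i ∈ t, w i • z i - ∑ i ∈ t, w' i • z' i) - (W - W') • m'‖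
      ≤ ‖∑ i ∈ t, (w i • z i - w' i • z' i)‖ + |W - W'| * D := by
        rw [← Finset.sum_sub_distrib]
        refine (norm_sub_le _ _).trans ?_
        rw [norm_smul, Real.norm_eq_abs]
        gcongr
    _ ≤ ∑ i ∈ t, ‖w i • z i - w' i • z' i‖ + (∑ i ∈ t, |w i - w' i|) * D := by
        gcongr
        · exact norm_sum_le _ _
        · exact (norm_nonneg _).trans hm'
        · rw [← Finset.sum_sub_distrib]
          exact Finset.abs_sum_le_sum_abs _ _
    _ = ∑ i ∈ t, (‖w i • z i - w' i • z' i‖ + |w i - w' i| * D) := by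
        rw [Finset.sum_add_distrib, Finset.sum_mul]

end Analysis

theorem tendsto_sum_range_div_of_tendsto_prod {g : ℕ → ℕ → ℝ} {B : ℝ}
    (hg₀ : ∀ i j, 0 ≤ g i j) (hgB : ∀ i j, g i j ≤ B)
    (hg : Tendsto (fun p : ℕ × ℕ => g p.1 p.2) (atTop ×ˢ atTop) (𝓝 0)) :
    Tendsto (fun j : ℕ => (∑ i ∈ Finset.range (j + 1), g i j) / (j + 1)) atTop (𝓝 0) := by
  refine tendsto_order.2 ⟨fun a ha => Eventually.of_forall fun j =>
    ha.trans_le (div_nonneg (Finset.sum_nonneg fun i _ => hg₀ i j) (by positivity)), ?_⟩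
  intro a ha
  rw [prod_atTop_atTop_eq] at hg
  obtain ⟨N, hN⟩ := eventually_atTop_prod_self.1 (hg.eventually (gt_mem_nhds (half_pos ha)))
  obtain ⟨J, hJ⟩ := exists_nat_gt (2 * N * B / a)
  filter_upwards [eventually_ge_atTop (max N J)] with j hj
  have hNj : N ≤ j + 1 := by omega
  have hhead : ∑ i ∈ Finset.range N, g i j ≤ N * B := by
    simpa using Finset.sum_le_card_nsmul (Finset.range N) _ _ fun i _ => hgB i j
  have htail : ∑ i ∈ Finset.Ico N (j + 1), g i j ≤ (j + 1) * (a / 2) := calc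
    ∑ i ∈ Finset.Ico N (j + 1), g i j ≤ ∑ i ∈ Finset.Ico N (j + 1), a / 2 :=
      Finset.sum_le_sum fun i hi =>
        (hN i j (Finset.mem_Ico.1 hi).1 (by omega)).le
    _ ≤ ∑ i ∈ Finset.range (j + 1), a / 2 :=
      Finset.sum_le_sum_of_subset_of_nonneg (fun i hi => by simp at hi ⊢; omega)
        fun _ _ _ => (half_pos ha).le
    _ = (j + 1) * (a / 2) := by simp
  have hJj : 2 * N * B / a < j + 1 :=
    hJ.trans_le (by exact_mod_cast (le_max_right N J).trans (by omega))
  rw [div_lt_iff₀ (by positivity), ← Finset.sum_range_add_sum_Ico _ hNj]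
  rw [div_lt_iff₀ ha] at hJj
  linarith

def AsymptoticallyStable {E : Type*} [SeminormedAddCommGroup E] (f : (ℕ → E) → ℕ → E)
    (K K' : Set E) : Prop :=
  (∀ x, (∀ i, x i ∈ K) → ∀ j, f x j ∈ K') ∧
  ∀ x x', (∀ i, x i ∈ K) → (∀ i, x' i ∈ K) → Tendsto (x - x') atTop (𝓝 0) →
    Tendsto (f x - f x') atTop (𝓝 0)

theorem AsymptoticallyStable.comp {E : Type*} [SeminormedAddCommGroup E]
    {f g : (ℕ → E) → ℕ → E} {K K' K'' : Set E} (hg : AsymptoticallyStable g K' K'')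
    (hf : AsymptoticallyStable f K K') : AsymptoticallyStable (g ∘ f) K K'' :=
  ⟨fun x hx => hg.1 _ (hf.1 x hx), fun x x' hx hx' hxx' =>
    hg.2 _ _ (hf.1 x hx) (hf.1 x' hx') (hf.2 x x' hx hx' hxx')⟩

namespace AttentionLayer

variable {d : ℕ} (L : AttentionLayer d)

noncomputable def attnSeq (x : ℕ → Fin d → ℝ) (j : ℕ) : Fin d → ℝ :=
  (Finset.range (j + 1)).centerMass (fun i => L.w (x i) (x j) (L.p i j)) (fun i => L.val (x i))

noncomputable def applySeq (x : ℕ → Fin d → ℝ) (j : ℕ) : Fin d → ℝ :=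
  L.F (L.attnSeq x j) (x j)

theorem apply_comp_val (x : ℕ → Fin d → ℝ) {n : ℕ} (j : Fin n) :
    L.apply (fun i : Fin n => x i) j = L.applySeq x j := by
  simp only [apply, attn, applySeq, attnSeq, Finset.centerMass, Nat.range_succ_eq_Iic,
    ← Fin.map_valEmbedding_Iic, Finset.sum_map]
  rfl

theorem sum_w_pos (x : ℕ → Fin d → ℝ) (j : ℕ) :
    0 < ∑ i ∈ Finset.range (j + 1), L.w (x i) (x j) (L.p i j) :=
  Finset.sum_pos (fun _ _ => L.w_pos _ _ _) Finset.nonempty_range_add_one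

theorem norm_attnSeq_le {x : ℕ → Fin d → ℝ} {D : ℝ} (hD : ∀ i, ‖L.val (x i)‖ ≤ D) (j : ℕ) :
    ‖L.attnSeq x j‖ ≤ D :=
  mem_closedBall_zero_iff.1 <| (convex_closedBall (0 : Fin d → ℝ) D).centerMass_mem
    (fun _ _ => (L.w_pos _ _ _).le) (L.sum_w_pos x j) (fun i _ => by simpa using hD i)

theorem tendsto_attnSeq_sub (hL : L.CompactPE) {K : Set (Fin d → ℝ)} (hK : IsCompact K)
    {x x' : ℕ → Fin d → ℝ} (hx : ∀ i, x i ∈ K) (hx' : ∀ i, x' i ∈ K)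
    (hxx' : Tendsto (x - x') atTop (𝓝 0)) :
    Tendsto (L.attnSeq x - L.attnSeq x') atTop (𝓝 0) := by
  obtain ⟨Kp, hKp, hp⟩ := hL
  have hS : IsCompact (K ×ˢ K ×ˢ Kp) := hK.prod (hK.prod hKp)
  have hmem : ∀ y : ℕ → Fin d → ℝ, (∀ i, y i ∈ K) → ∀ ij : ℕ × ℕ,
      (y ij.1, y ij.2, L.p ij.1 ij.2) ∈ K ×ˢ K ×ˢ Kp :=
    fun y hy ij => ⟨hy _, hy _, hp _ _⟩
  obtain ⟨c, hc, hcw⟩ := hS.exists_forall_le' L.w_cont.continuousOn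
    (fun t _ => L.w_pos t.1 t.2.1 t.2.2)
  obtain ⟨D, hD⟩ := hK.exists_bound_of_continuousOn L.val_cont.continuousOn
  have hD₀ : 0 ≤ D := (norm_nonneg _).trans (hD _ (hx 0))
  -- one uniform-continuity argument controls both the weights and the weighted values
  set Φ : (Fin d → ℝ) × (Fin d → ℝ) × (Fin d → ℝ) → ℝ × (Fin d → ℝ) :=
    fun t => (L.w t.1 t.2.1 t.2.2, L.w t.1 t.2.1 t.2.2 • L.val t.1)
  have hΦ : Continuous Φ := L.w_cont.prodMk (L.w_cont.smul (L.val_cont.comp continuous_fst))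
  obtain ⟨M, hM⟩ := hS.exists_bound_of_continuousOn hΦ.continuousOn
  set g : ℕ → ℕ → ℝ := fun i j => ‖Φ (x i, x j, L.p i j) - Φ (x' i, x' j, L.p i j)‖
  have hgB : ∀ i j, g i j ≤ M + M := fun i j =>
    (norm_sub_le _ _).trans (add_le_add (hM _ (hmem x hx (i, j))) (hM _ (hmem x' hx' (i, j))))
  have hg : Tendsto (fun ij : ℕ × ℕ => g ij.1 ij.2) (atTop ×ˢ atTop) (𝓝 0) := by
    have hdiff : Tendsto (fun ij : ℕ × ℕ => (x ij.1, x ij.2, L.p ij.1 ij.2) -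
        (x' ij.1, x' ij.2, L.p ij.1 ij.2)) (atTop ×ˢ atTop) (𝓝 0) := by
      simp only [Prod.mk_sub_mk, sub_self]
      exact (hxx'.comp tendsto_fst).prodMk_nhds
        ((hxx'.comp tendsto_snd).prodMk_nhds tendsto_const_nhds)
    simpa using ((hS.uniformContinuousOn_of_continuous hΦ.continuousOn).tendsto_sub_zero
      (hmem x hx) (hmem x' hx') hdiff).norm
  have hbound : ∀ j : ℕ, ‖L.attnSeq x j - L.attnSeq x' j‖ ≤
      (1 + D) / c * ((∑ i ∈ Finset.range (j + 1), g i j) / (j + 1)) := by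
    intro j
    have hW : (j + 1) * c ≤ ∑ i ∈ Finset.range (j + 1), L.w (x i) (x j) (L.p i j) := by
      simpa using Finset.card_nsmul_le_sum (Finset.range (j + 1))
        (fun i => L.w (x i) (x j) (L.p i j)) c fun i _ => hcw _ (hmem x hx (i, j))
    have hterm : ∀ i, ‖L.w (x i) (x j) (L.p i j) • L.val (x i) -
        L.w (x' i) (x' j) (L.p i j) • L.val (x' i)‖ +
        |L.w (x i) (x j) (L.p i j) - L.w (x' i) (x' j) (L.p i j)| * D ≤ (1 + D) * g i j := by
      intro i
      have h₁ := norm_fst_le (Φ (x i, x j, L.p i j) - Φ (x' i, x' j, L.p i j))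
      have h₂ := norm_snd_le (Φ (x i, x j, L.p i j) - Φ (x' i, x' j, L.p i j))
      simp only [Prod.fst_sub, Prod.snd_sub, Real.norm_eq_abs, Φ] at h₁ h₂
      linarith [mul_le_mul_of_nonneg_right h₁ hD₀]
    calc ‖L.attnSeq x j - L.attnSeq x' j‖
        ≤ (∑ i ∈ Finset.range (j + 1), (‖L.w (x i) (x j) (L.p i j) • L.val (x i) -
            L.w (x' i) (x' j) (L.p i j) • L.val (x' i)‖ +
            |L.w (x i) (x j) (L.p i j) - L.w (x' i) (x' j) (L.p i j)| * D)) /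
          ∑ i ∈ Finset.range (j + 1), L.w (x i) (x j) (L.p i j) :=
        Finset.norm_centerMass_sub_centerMass_le _ (L.sum_w_pos x j)
          (fun _ _ => (L.w_pos _ _ _).le) (L.sum_w_pos x' j) fun i _ => hD _ (hx' i)
      _ ≤ (∑ i ∈ Finset.range (j + 1), (1 + D) * g i j) / ((j + 1) * c) := by
        gcongr with i
        exact hterm i
      _ = (1 + D) / c * ((∑ i ∈ Finset.range (j + 1), g i j) / (j + 1)) := by
        rw [← Finset.mul_sum]
        field_simp
  refine squeeze_zero_norm hbound ?_
  simpa using (tendsto_sum_range_div_of_tendsto_prod (fun _ _ => norm_nonneg _) hgB hg).const_mul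
    ((1 + D) / c)

theorem exists_asymptoticallyStable_applySeq (hL : L.CompactPE) {K : Set (Fin d → ℝ)}
    (hK : IsCompact K) : ∃ K', IsCompact K' ∧ AsymptoticallyStable L.applySeq K K' := by
  obtain ⟨D, hD⟩ := hK.exists_bound_of_continuousOn L.val_cont.continuousOn
  have hB : IsCompact (closedBall (0 : Fin d → ℝ) D ×ˢ K) := (isCompact_closedBall 0 D).prod hK
  have hmem : ∀ y : ℕ → Fin d → ℝ, (∀ i, y i ∈ K) → ∀ j,
      (L.attnSeq y j, y j) ∈ closedBall (0 : Fin d → ℝ) D ×ˢ K := fun y hy j =>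
    ⟨mem_closedBall_zero_iff.2 (L.norm_attnSeq_le (fun i => hD _ (hy i)) j), hy j⟩
  refine ⟨(fun t => L.F t.1 t.2) '' (closedBall (0 : Fin d → ℝ) D ×ˢ K), hB.image L.F_cont,
    fun x hx j => ⟨_, hmem x hx j, rfl⟩, fun x x' hx hx' hxx' => ?_⟩
  have hpair : Tendsto (fun j => (L.attnSeq x j, x j) - (L.attnSeq x' j, x' j)) atTop (𝓝 0) := by
    simp only [Prod.mk_sub_mk]
    exact (L.tendsto_attnSeq_sub hL hK hx hx' hxx').prodMk_nhds hxx'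
  exact (hB.uniformContinuousOn_of_continuous L.F_cont.continuousOn).tendsto_sub_zero
    (hmem x hx) (hmem x' hx') hpair

end AttentionLayer

noncomputable def applyLayersSeq {d : ℕ} (Ls : List (AttentionLayer d)) (x : ℕ → Fin d → ℝ) :
    ℕ → Fin d → ℝ :=
  Ls.foldl (fun v L => L.applySeq v) x

theorem applyLayers_comp_val {d : ℕ} (Ls : List (AttentionLayer d)) (x : ℕ → Fin d → ℝ)
    {n : ℕ} (j : Fin n) : applyLayers Ls (fun i : Fin n => x i) j = applyLayersSeq Ls x j := by
  induction Ls generalizing x with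
  | nil => rfl
  | cons L Ls ih =>
    have hL : L.apply (fun i : Fin n => x i) = fun i : Fin n => L.applySeq x i :=
      funext (L.apply_comp_val x)
    exact (congrArg (fun y => applyLayers Ls y j) hL).trans (ih _)

theorem exists_asymptoticallyStable_applyLayersSeq {d : ℕ} (Ls : List (AttentionLayer d))
    (hLs : ∀ L ∈ Ls, L.CompactPE) {K : Set (Fin d → ℝ)} (hK : IsCompact K) :
    ∃ K', IsCompact K' ∧ AsymptoticallyStable (applyLayersSeq Ls) K K' := by
  induction Ls generalizing K with
  | nil => exact ⟨K, hK, fun x hx => hx, fun x x' _ _ hxx' => hxx'⟩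
  | cons L Ls ih =>
    obtain ⟨K₁, hK₁, hL⟩ := L.exists_asymptoticallyStable_applySeq
      (hLs L List.mem_cons_self) hK
    obtain ⟨K₂, hK₂, hLs'⟩ := ih (fun L' hL' => hLs L' (List.mem_cons_of_mem _ hL')) hK₁
    exact ⟨K₂, hK₂, hLs'.comp hL⟩

theorem Transformer.eval_eq_proj_applyLayersSeq {A : Type*} [Fintype A] {d : ℕ}
    (T : Transformer A d) (α : ℕ → A) (n : ℕ) :
    T.eval (fun i : Fin (n + 1) => α (i.val + 1)) =
      T.proj (applyLayersSeq T.layers (fun j => T.embed (α (j + 1)) j) n) :=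
  congrArg T.proj (applyLayers_comp_val T.layers (fun j => T.embed (α (j + 1)) j) (Fin.last n))

theorem Transformer.tendsto_eval_sub {A : Type*} [Fintype A] {d : ℕ} (T : Transformer A d)
    (hT : T.IsCompactT) {α α' : ℕ → A} (h : α =ᶠ[atTop] α') :
    Tendsto (fun n => T.eval (fun i : Fin (n + 1) => α (i.val + 1)) -
      T.eval (fun i : Fin (n + 1) => α' (i.val + 1))) atTop (𝓝 0) := by
  obtain ⟨⟨Ke, hKe, hembed⟩, hLs⟩ := hT
  obtain ⟨K', hK', hmaps, hstable⟩ := exists_asymptoticallyStable_applyLayersSeq T.layers hLs hKe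
  set x : ℕ → Fin d → ℝ := fun j => T.embed (α (j + 1)) j
  set x' : ℕ → Fin d → ℝ := fun j => T.embed (α' (j + 1)) j
  have hx : ∀ i, x i ∈ Ke := fun i => hembed _ _
  have hx' : ∀ i, x' i ∈ Ke := fun i => hembed _ _
  have hxx' : Tendsto (x - x') atTop (𝓝 0) :=
    tendsto_const_nhds.congr' <| (h.comp_tendsto (tendsto_add_atTop_nat 1)).mono
      fun j hj => by simp [x, x', show α (j + 1) = α' (j + 1) from hj]
  simpa only [T.eval_eq_proj_applyLayersSeq] using
    (hK'.uniformContinuousOn_of_continuous T.proj_cont.continuousOn).tendsto_sub_zero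
      (hmaps x hx) (hmaps x' hx') (hstable x x' hx hx' hxx')

def EventuallyPredicts {A : Type*} (p : ℕ → A → ℝ) (a : ℕ → A) : Prop :=
  ∃ ε : ℝ, 0 < ε ∧ ∃ n₀ : ℕ, ∀ n ≥ n₀, ∀ σ : A, σ ≠ a n → p n σ + ε ≤ p n (a n)

theorem EventuallyPredicts.of_tendsto_sub {A : Type*} [Fintype A] {p q : ℕ → A → ℝ}
    {a b : ℕ → A} (hp : EventuallyPredicts p a) (hpq : Tendsto (p - q) atTop (𝓝 0))
    (hab : a =ᶠ[atTop] b) : EventuallyPredicts q b := by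
  obtain ⟨ε, hε, n₀, hn₀⟩ := hp
  have hclose : ∀ᶠ n in atTop, ‖p n - q n‖ < ε / 3 :=
    (tendsto_zero_iff_norm_tendsto_zero.1 hpq).eventually (gt_mem_nhds (by positivity))
  obtain ⟨n₁, hn₁⟩ := eventually_atTop.1 (hclose.and (hab.and (eventually_ge_atTop n₀)))
  refine ⟨ε / 3, by positivity, n₁, fun n hn σ hσ => ?_⟩
  obtain ⟨hpqn, habn, hn₀n⟩ := hn₁ n hn
  have hcoord : ∀ τ, |p n τ - q n τ| < ε / 3 := fun τ =>
    (norm_le_pi_norm (p n - q n) τ).trans_lt hpqn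
  rw [← habn] at hσ ⊢
  have := hn₀ n hn₀n σ hσ
  linarith [abs_lt.1 (hcoord σ), abs_lt.1 (hcoord (a n))]

/-- **Proposition (finite differences).** Eventual learnability by a compact decoder-only
Transformer is not affected by changing an infinite sequence in finitely many positions. -/
theorem eventuallyLearns_iff_of_finite_diff {A : Type*} [Fintype A] {d : ℕ}
    (T : Transformer A d) (hT : T.IsCompactT) (α α' : ℕ → A)
    (hfin : {n : ℕ | α n ≠ α' n}.Finite) :
    EventuallyLearns T α ↔ EventuallyLearns T α' := by
  have transfer : ∀ β β' : ℕ → A, β =ᶠ[atTop] β' →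
      EventuallyLearns T β → EventuallyLearns T β' := fun β β' h hβ =>
    EventuallyPredicts.of_tendsto_sub (p := fun n => T.eval fun i : Fin (n + 1) => β (i.val + 1))
      (a := fun n => β (n + 2)) hβ (T.tendsto_eval_sub hT h)
      (h.comp_tendsto (tendsto_add_atTop_nat 2))
  have h : α =ᶠ[atTop] α' := by
    rw [← Nat.cofinite_eq_atTop]
    exact eventually_cofinite.2 hfin
  exact ⟨transfer α α' h, transfer α' α h.symm⟩
end

section
/- Let Σ ⊇ {0,1} be a finite alphabet. There is no compact decoder-only Transformer over Σ that eventually learns every periodic infinite sequence over Σ (a sequence α ∈ Σ^ω is periodic if there exists k ≥ 1 with α_{n+k} = α_n for all n). -/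
/-!
A compact Transformer cannot notice a perturbation of its input at a sparse set of positions:
if two input sequences with values in a compact set agree up to `θ` outside a set `S` occupying
at most a `δ`-fraction of every prefix, then for `θ, δ` small enough the outputs of every layer
agree up to `ε` outside `S`. For a single layer this holds because attention is the quotient of
two prefix averages of a continuous score; a sparse set moves an average of bounded terms by
`O(δ)`, and on a compact set the weights are bounded below, so the quotient is uniformly
continuous.

Hence, for `k` large, the predictions after `0 0 0 …` and after the `k`-periodic sequence with a
`1` at every multiple of `k` are close at every position just before a `1`. Learning the first
sequence forces a clear preference for `0` there, learning the second one for `1`.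
-/

open Finset Filter

def PrefixSparse {n : ℕ} (δ : ℝ) (S : Finset (Fin n)) : Prop :=
  ∀ j : Fin n, ((S ∩ Iic j).card : ℝ) ≤ δ * (Iic j).card

theorem PrefixSparse.mono {n : ℕ} {δ δ' : ℝ} {S : Finset (Fin n)} (h : PrefixSparse δ S)
    (hδ : δ ≤ δ') : PrefixSparse δ' S :=
  fun j => (h j).trans (by gcongr)

theorem prefixSparse_dvd_succ {n : ℕ} (k : ℕ) :
    PrefixSparse (1 / k) (univ.filter fun i : Fin n => k ∣ i.val + 1) := by
  intro j
  have hcount :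
      ((univ.filter fun i : Fin n => k ∣ i.val + 1) ∩ Iic j).card ≤ (j.val + 1) / k := by
    rw [← Nat.card_multiples]
    refine card_le_card_of_injOn Fin.val (fun i hi => ?_) Fin.val_injective.injOn
    simp only [mem_coe, mem_inter, mem_filter, mem_univ, true_and, mem_Iic, Fin.le_def] at hi
    simp only [mem_coe, mem_filter, mem_range]
    omega
  calc ((_ ∩ Iic j).card : ℝ) ≤ ((j.val + 1) / k : ℕ) := by exact_mod_cast hcount
    _ ≤ ((j.val + 1 : ℕ) : ℝ) / k := Nat.cast_div_le
    _ = 1 / k * (Iic j).card := by rw [Fin.card_Iic]; ring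

section SparselyStable

variable {E F G : Type*} [PseudoMetricSpace E] [PseudoMetricSpace F] [PseudoMetricSpace G]

structure SparselyStable (Φ : (n : ℕ) → (Fin n → E) → Fin n → F) (K : Set E) (K' : Set F) :
    Prop where
  mapsTo : ∀ n (x : Fin n → E), (∀ i, x i ∈ K) → ∀ j, Φ n x j ∈ K'
  stable : ∀ ε > 0, ∃ θ > 0, ∃ δ > 0, ∀ n (x y : Fin n → E) (S : Finset (Fin n)),
    (∀ i, x i ∈ K) → (∀ i, y i ∈ K) → PrefixSparse δ S → (∀ i ∉ S, dist (x i) (y i) ≤ θ) →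
      ∀ j ∉ S, dist (Φ n x j) (Φ n y j) ≤ ε

theorem UniformContinuousOn.sparselyStable {f : E → F} {K : Set E} {K' : Set F}
    (hf : UniformContinuousOn f K) (hmaps : Set.MapsTo f K K') :
    SparselyStable (fun _ x j => f (x j)) K K' where
  mapsTo _ _ hx j := hmaps (hx j)
  stable ε hε := by
    obtain ⟨θ, hθ, hf⟩ := Metric.uniformContinuousOn_iff_le.mp hf ε hε
    exact ⟨θ, hθ, 1, one_pos, fun _ x y _ hx hy _ hxy j hj => hf _ (hx j) _ (hy j) (hxy j hj)⟩

theorem SparselyStable.comp {Φ : (n : ℕ) → (Fin n → E) → Fin n → F}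
    {Ψ : (n : ℕ) → (Fin n → F) → Fin n → G} {K : Set E} {K' : Set F} {K'' : Set G}
    (hΨ : SparselyStable Ψ K' K'') (hΦ : SparselyStable Φ K K') :
    SparselyStable (fun n x => Ψ n (Φ n x)) K K'' where
  mapsTo n x hx := hΨ.mapsTo n _ (hΦ.mapsTo n x hx)
  stable ε hε := by
    obtain ⟨θ', hθ', δ', hδ', hΨε⟩ := hΨ.stable ε hε
    obtain ⟨θ, hθ, δ, hδ, hΦθ'⟩ := hΦ.stable θ' hθ'
    refine ⟨θ, hθ, min δ δ', lt_min hδ hδ', fun n x y S hx hy hS hxy => ?_⟩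
    exact hΨε n _ _ S (hΦ.mapsTo n x hx) (hΦ.mapsTo n y hy) (hS.mono (min_le_right _ _))
      (hΦθ' n x y S hx hy (hS.mono (min_le_left _ _)) hxy)

theorem SparselyStable.prodMk {Φ : (n : ℕ) → (Fin n → E) → Fin n → F}
    {Ψ : (n : ℕ) → (Fin n → E) → Fin n → G} {K : Set E} {K₁ : Set F} {K₂ : Set G}
    (hΦ : SparselyStable Φ K K₁) (hΨ : SparselyStable Ψ K K₂) :
    SparselyStable (fun n x j => (Φ n x j, Ψ n x j)) K (K₁ ×ˢ K₂) where
  mapsTo n x hx j := ⟨hΦ.mapsTo n x hx j, hΨ.mapsTo n x hx j⟩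
  stable ε hε := by
    obtain ⟨θ₁, hθ₁, δ₁, hδ₁, hΦε⟩ := hΦ.stable ε hε
    obtain ⟨θ₂, hθ₂, δ₂, hδ₂, hΨε⟩ := hΨ.stable ε hε
    refine ⟨min θ₁ θ₂, lt_min hθ₁ hθ₂, min δ₁ δ₂, lt_min hδ₁ hδ₂,
      fun n x y S hx hy hS hxy j hj => ?_⟩
    rw [Prod.dist_eq]
    exact max_le
      (hΦε n x y S hx hy (hS.mono (min_le_left _ _))
        (fun i hi => (hxy i hi).trans (min_le_left _ _)) j hj)
      (hΨε n x y S hx hy (hS.mono (min_le_right _ _))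
        (fun i hi => (hxy i hi).trans (min_le_right _ _)) j hj)

end SparselyStable

theorem dist_average_le_of_sparse {ι W : Type*} [DecidableEq ι] [SeminormedAddCommGroup W]
    [NormedSpace ℝ W] {t S : Finset ι} {u v : ι → W} {B η δ : ℝ} (ht : t.Nonempty)
    (hu : ∀ i ∈ t, ‖u i‖ ≤ B) (hv : ∀ i ∈ t, ‖v i‖ ≤ B) (hη : 0 ≤ η)
    (huv : ∀ i ∈ t, i ∉ S → dist (u i) (v i) ≤ η) (hS : ((S ∩ t).card : ℝ) ≤ δ * t.card) :
    dist ((t.card : ℝ)⁻¹ • ∑ i ∈ t, u i) ((t.card : ℝ)⁻¹ • ∑ i ∈ t, v i) ≤ η + 2 * B * δ := by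
  obtain ⟨i₀, hi₀⟩ := ht
  have hB : 0 ≤ B := (norm_nonneg _).trans (hu i₀ hi₀)
  have hcard : (0 : ℝ) < t.card := by exact_mod_cast card_pos.mpr ⟨i₀, hi₀⟩
  have hterm : ∀ i ∈ t, dist (u i) (v i) ≤ η + if i ∈ S then 2 * B else 0 := by
    intro i hi
    split_ifs with hiS
    · linarith [dist_le_norm_add_norm (u i) (v i), hu i hi, hv i hi]
    · simpa using huv i hi hiS
  have hsum : ∑ i ∈ t, dist (u i) (v i) ≤ t.card * (η + 2 * B * δ) := calc
    _ ≤ ∑ i ∈ t, (η + if i ∈ S then 2 * B else 0) := sum_le_sum hterm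
    _ = t.card * η + 2 * B * (S ∩ t).card := by
      rw [sum_add_distrib, sum_ite_mem, inter_comm]
      simp only [sum_const, nsmul_eq_mul]
      ring
    _ ≤ t.card * (η + 2 * B * δ) := by
      linarith [mul_le_mul_of_nonneg_left hS (by positivity : (0 : ℝ) ≤ 2 * B)]
  rw [dist_smul₀, Real.norm_eq_abs, abs_inv, abs_of_pos hcard, inv_mul_le_iff₀ hcard]
  exact (dist_sum_sum_le t u v).trans hsum

theorem sparselyStable_prefixAverage {E P W : Type*} [PseudoMetricSpace E] [PseudoMetricSpace P]
    [SeminormedAddCommGroup W] [NormedSpace ℝ W] {G : E × E × P → W} {p : ℕ → ℕ → P}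
    {K : Set E} {KP : Set P} {D : Set W} (hK : IsCompact K) (hKP : IsCompact KP)
    (hp : ∀ i j, p i j ∈ KP) (hG : ContinuousOn G (K ×ˢ K ×ˢ KP)) (hD : Convex ℝ D)
    (hGD : Set.MapsTo G (K ×ˢ K ×ˢ KP) D) :
    SparselyStable
      (fun _ x j => ((Iic j).card : ℝ)⁻¹ • ∑ i ∈ Iic j, G (x i, x j, p i.val j.val)) K D where
  mapsTo n x hx j := by
    rw [smul_sum]
    refine hD.sum_mem (fun _ _ => by positivity) ?_ fun i _ => hGD ⟨hx i, hx j, hp _ _⟩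
    rw [sum_const, nsmul_eq_mul, mul_inv_cancel₀ (by rw [Fin.card_Iic]; positivity)]
  stable ε hε := by
    have hQ : IsCompact (K ×ˢ K ×ˢ KP) := hK.prod (hK.prod hKP)
    obtain ⟨B, hB⟩ := hQ.exists_bound_of_continuousOn hG
    obtain ⟨θ, hθ, hGθ⟩ := Metric.uniformContinuousOn_iff_le.mp
      (hQ.uniformContinuousOn_of_continuous hG) (ε / 2) (half_pos hε)
    obtain ⟨δ, hδ, hBδ⟩ := exists_pos_mul_lt (half_pos hε) (2 * B)
    refine ⟨θ, hθ, δ, hδ, fun n x y S hx hy hS hxy j hj => ?_⟩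
    have hmem (z : Fin n → E) (hz : ∀ i, z i ∈ K) (i : Fin n) :
        (z i, z j, p i.val j.val) ∈ K ×ˢ K ×ˢ KP :=
      ⟨hz i, hz j, hp _ _⟩
    have hclose (i : Fin n) (hi : i ∉ S) :
        dist (G (x i, x j, p i.val j.val)) (G (y i, y j, p i.val j.val)) ≤ ε / 2 := by
      refine hGθ _ (hmem x hx i) _ (hmem y hy i) ?_
      simp only [Prod.dist_eq, dist_self]
      exact max_le (hxy i hi) (max_le (hxy j hj) hθ.le)
    calc _ ≤ ε / 2 + 2 * B * δ :=
          dist_average_le_of_sparse ⟨j, mem_Iic.mpr le_rfl⟩ (fun i _ => hB _ (hmem x hx i))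
            (fun i _ => hB _ (hmem y hy i)) (half_pos hε).le (fun i _ hi => hclose i hi) (hS j)
      _ ≤ ε := by linarith

namespace AttentionLayer

variable {d : ℕ} (L : AttentionLayer d)

def score (q : (Fin d → ℝ) × (Fin d → ℝ) × (Fin d → ℝ)) : ℝ × (Fin d → ℝ) :=
  (L.w q.1 q.2.1 q.2.2, L.w q.1 q.2.1 q.2.2 • L.val q.1)

theorem continuous_score : Continuous L.score :=
  L.w_cont.prodMk (L.w_cont.smul (L.val_cont.comp continuous_fst))

theorem attn_eq_quotient_average {n : ℕ} (x : Fin n → (Fin d → ℝ)) (j : Fin n) :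
    L.attn x j =
      (fun m : ℝ × (Fin d → ℝ) => m.1⁻¹ • m.2)
        (((Iic j).card : ℝ)⁻¹ • ∑ i ∈ Iic j, L.score (x i, x j, L.p i.val j.val)) := by
  have hc : ((Iic j).card : ℝ)⁻¹ ≠ 0 := by rw [Fin.card_Iic]; positivity
  simp only [attn, score, Prod.smul_fst, Prod.smul_snd, Prod.fst_sum, Prod.snd_sum, smul_eq_mul,
    mul_inv, mul_smul]
  rw [smul_comm _ ((Iic j).card : ℝ)⁻¹, inv_smul_smul₀ hc]

theorem exists_sparselyStable_apply (hL : L.CompactPE) {K : Set (Fin d → ℝ)}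
    (hK : IsCompact K) :
    ∃ K' : Set (Fin d → ℝ), IsCompact K' ∧ SparselyStable (fun _ => L.apply) K K' := by
  obtain ⟨KP, hKP, hp⟩ := hL
  have hQ : IsCompact (K ×ˢ K ×ˢ KP) := hK.prod (hK.prod hKP)
  obtain ⟨w₀, hw₀, hw₀Q⟩ := hQ.exists_forall_le' L.w_cont.continuousOn
    fun q _ => L.w_pos q.1 q.2.1 q.2.2
  obtain ⟨B, hB⟩ := hQ.exists_bound_of_continuousOn L.continuous_score.continuousOn
  set D : Set (ℝ × (Fin d → ℝ)) := {m | w₀ ≤ m.1} ∩ Metric.closedBall 0 B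
  have hD : IsCompact D :=
    (isCompact_closedBall 0 B).inter_left (isClosed_le continuous_const continuous_fst)
  have hDconv : Convex ℝ D :=
    (convex_halfSpace_ge (LinearMap.fst ℝ ℝ (Fin d → ℝ)).isLinear w₀).inter (convex_closedBall 0 B)
  set quot : ℝ × (Fin d → ℝ) → (Fin d → ℝ) := fun m => m.1⁻¹ • m.2
  have hquot : ContinuousOn quot D :=
    (continuousOn_fst.inv₀ fun m hm => (hw₀.trans_le hm.1).ne').smul continuousOn_snd
  have hmean := sparselyStable_prefixAverage hK hKP hp L.continuous_score.continuousOn hDconv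
    fun q hq => ⟨hw₀Q q hq, mem_closedBall_zero_iff.mpr (hB q hq)⟩
  have hattn : SparselyStable (fun _ => L.attn) K (quot '' D) := by
    have := ((hD.uniformContinuousOn_of_continuous hquot).sparselyStable
      (Set.mapsTo_image quot D)).comp hmean
    convert this using 4 with n x j
    exact L.attn_eq_quotient_average x j
  have hC : IsCompact ((quot '' D) ×ˢ K) := (hD.image_of_continuousOn hquot).prod hK
  refine ⟨(fun t => L.F t.1 t.2) '' ((quot '' D) ×ˢ K), hC.image L.F_cont, ?_⟩
  have hid : SparselyStable (fun _ x => x) K K :=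
    uniformContinuous_id.uniformContinuousOn.sparselyStable (Set.mapsTo_id K)
  exact ((hC.uniformContinuousOn_of_continuous L.F_cont.continuousOn).sparselyStable
    (Set.mapsTo_image _ _)).comp (hattn.prodMk hid)

end AttentionLayer

theorem exists_sparselyStable_applyLayers {d : ℕ} (Ls : List (AttentionLayer d))
    (hLs : ∀ L ∈ Ls, L.CompactPE) {K : Set (Fin d → ℝ)} (hK : IsCompact K) :
    ∃ K' : Set (Fin d → ℝ), IsCompact K' ∧ SparselyStable (fun _ => applyLayers Ls) K K' := by
  induction Ls generalizing K with
  | nil =>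
    exact ⟨K, hK, uniformContinuous_id.uniformContinuousOn.sparselyStable (Set.mapsTo_id K)⟩
  | cons L Ls ih =>
    obtain ⟨K₁, hK₁, hL⟩ := L.exists_sparselyStable_apply (hLs L List.mem_cons_self) hK
    obtain ⟨K', hK', hLs'⟩ := ih (fun L' hL' => hLs L' (List.mem_cons_of_mem L hL')) hK₁
    exact ⟨K', hK', hLs'.comp hL⟩

namespace Transformer

variable {A : Type*} [Fintype A] {d : ℕ}

theorem exists_sparselyStable (T : Transformer A d) (hT : T.IsCompactT) :
    ∃ K : Set (Fin d → ℝ), (∀ a i, T.embed a i ∈ K) ∧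
      SparselyStable (fun _ x j => T.proj (applyLayers T.layers x j)) K Set.univ := by
  obtain ⟨⟨K, hK, hembed⟩, hLs⟩ := hT
  obtain ⟨K', hK', hlayers⟩ := exists_sparselyStable_applyLayers T.layers hLs hK
  refine ⟨K, hembed, ?_⟩
  exact ((hK'.uniformContinuousOn_of_continuous T.proj_cont.continuousOn).sparselyStable
    (Set.mapsTo_univ _ _)).comp hlayers

theorem exists_dist_eval_le_of_eq_off_multiples (T : Transformer A d) (hT : T.IsCompactT)
    {ε : ℝ} (hε : 0 < ε) :
    ∃ k ≥ 2, ∀ α β : ℕ → A, (∀ m, ¬k ∣ m → α m = β m) → ∀ n, ¬k ∣ n + 1 →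
      dist (T.eval fun i : Fin (n + 1) => α (i.val + 1))
        (T.eval fun i : Fin (n + 1) => β (i.val + 1)) ≤ ε := by
  obtain ⟨K, hembed, hstable⟩ := T.exists_sparselyStable hT
  obtain ⟨θ, hθ, δ, hδ, hclose⟩ := hstable.stable ε hε
  obtain ⟨N, hN⟩ := exists_nat_one_div_lt hδ
  refine ⟨N + 2, by omega, fun α β hαβ n hn => ?_⟩
  have hS : PrefixSparse δ (univ.filter fun i : Fin (n + 1) => N + 2 ∣ i.val + 1) :=
    (prefixSparse_dvd_succ (N + 2)).mono <| calc
      1 / ((N + 2 : ℕ) : ℝ) ≤ 1 / (N + 1) := by gcongr; push_cast; linarith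
      _ ≤ δ := hN.le
  refine hclose (n + 1) _ _ _ (fun _ => hembed _ _) (fun _ => hembed _ _) hS (fun i hi => ?_)
    (Fin.last n) (by simpa using hn)
  rw [hαβ _ (by simpa using hi), dist_self]
  exact hθ.le

end Transformer

/-- **Corollary.** Over an alphabet containing two distinct symbols `zero` and `one`,
no compact decoder-only Transformer eventually learns every periodic infinite sequence. -/
theorem no_transformer_learns_all_periodic {A : Type*} [Fintype A]
    (zero one : A) (h01 : zero ≠ one) :
    ¬ ∃ (d : ℕ) (T : Transformer A d), T.IsCompactT ∧
      ∀ α : ℕ → A, (∃ k : ℕ, 1 ≤ k ∧ ∀ n : ℕ, α (n + k) = α n) →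
        EventuallyLearns T α := by
  rintro ⟨d, T, hT, hlearn⟩
  obtain ⟨ε, hε, n₀, hzero⟩ := hlearn (fun _ => zero) ⟨1, le_rfl, fun _ => rfl⟩
  obtain ⟨k, hk, hclose⟩ := T.exists_dist_eval_le_of_eq_off_multiples hT (half_pos hε)
  set α : ℕ → A := fun m => if k ∣ m then one else zero
  obtain ⟨ε', hε', n₁, hα⟩ := hlearn α ⟨k, by omega, fun m => by simp [α]⟩
  set n := k * (n₀ + n₁ + 1) - 2
  have hkm : 2 * (n₀ + n₁ + 1) ≤ k * (n₀ + n₁ + 1) := Nat.mul_le_mul_right _ hk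
  have hkn : k ∣ n + 2 := ⟨n₀ + n₁ + 1, by omega⟩
  have hαn : α (n + 2) = one := if_pos hkn
  have hdist := hclose α (fun _ => zero) (fun _ hm => if_neg hm) n fun h => by
    have := Nat.le_of_dvd one_pos ((Nat.dvd_add_right h).mp hkn)
    omega
  have hcoord (a : A) : |T.eval (fun i : Fin (n + 1) => α (i.val + 1)) a -
      T.eval (fun _ : Fin (n + 1) => zero) a| ≤ ε / 2 := by
    rw [← Real.dist_eq]
    exact (dist_le_pi_dist _ _ a).trans hdist
  have h0 := hzero n (by omega) one h01.symm
  have h1 := hα n (by omega) zero (by rw [hαn]; exact h01)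
  rw [hαn] at h1
  linarith [abs_le.mp (hcoord one), abs_le.mp (hcoord zero)]
end

section
/- Let Σ be a finite alphabet, let T be a compact decoder-only Transformer over Σ, and let α ∈ Σ^ω be eventually learned by T. Then there exist δ > 0 and n₀ ∈ ℕ such that for every n ≥ n₀ and every finite sequence β ∈ Σ^n with β_n = α_n and d_H(α_1…α_n, β) ≤ δ, the token α_{n+1} is the unique maximizer of the distribution T(β), i.e., T(β)(α_{n+1}) > T(β)(σ) for every σ ∈ Σ with σ ≠ α_{n+1}. -/
open Finset Filter

/-! Since the embedding and the positional encodings range over compact sets, every layer is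
uniformly continuous where it is evaluated and its attention weights are bounded above and away
from zero. An attention vector is a weighted average over the whole prefix, so each position
carries weight `O(1 / n)`: if two inputs are close at the last position and at all but a small
fraction of the positions, their attention vectors, and hence the layer outputs at the last
position, are close. Propagating this through the layers shows that the final representations of
`α₁ … αₙ` and of `β` are close; the projection is uniformly continuous on a compact set, so
`T(β)` differs from `T(α₁ … αₙ)` by less than half the learning margin. -/

theorem IsCompact.exists_pos_forall_norm_le {X E : Type*} [TopologicalSpace X]
    [SeminormedAddCommGroup E] {K : Set X} (hK : IsCompact K) {f : X → E} (hf : ContinuousOn f K) :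
    ∃ C > 0, ∀ x ∈ K, ‖f x‖ ≤ C := by
  obtain ⟨C, hC⟩ := hK.exists_bound_of_continuousOn hf
  exact ⟨max C 1, by positivity, fun x hx => (hC x hx).trans (le_max_left _ _)⟩

section CenterMass

variable {ι E : Type*} [NormedAddCommGroup E] [NormedSpace ℝ E]

theorem Finset.norm_centerMass_le {s : Finset ι} {w : ι → ℝ} {v : ι → E} {V : ℝ}
    (hw : ∀ i ∈ s, 0 ≤ w i) (hW : 0 < ∑ i ∈ s, w i) (hv : ∀ i ∈ s, ‖v i‖ ≤ V) :
    ‖s.centerMass w v‖ ≤ V := by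
  simpa using (convex_closedBall (0 : E) V).centerMass_mem hw hW
    fun i hi => mem_closedBall_zero_iff.2 (hv i hi)

theorem Finset.centerMass_sub_centerMass (s : Finset ι) {w w' : ι → ℝ} (v v' : ι → E)
    (hW : ∑ i ∈ s, w i ≠ 0) (hW' : ∑ i ∈ s, w' i ≠ 0) :
    s.centerMass w v - s.centerMass w' v' = (∑ i ∈ s, w' i)⁻¹ •
      ∑ i ∈ s, ((w' i - w i) • (s.centerMass w v - v i) + w' i • (v i - v' i)) := by
  have hwv : ∑ i ∈ s, w i • v i = (∑ i ∈ s, w i) • s.centerMass w v :=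
    (smul_inv_smul₀ hW _).symm
  have hwv' : (∑ i ∈ s, w' i) • s.centerMass w' v' = ∑ i ∈ s, w' i • v' i :=
    smul_inv_smul₀ hW' _
  rw [eq_inv_smul_iff₀ hW', smul_sub, hwv']
  simp only [sub_smul, smul_sub, Finset.sum_add_distrib, Finset.sum_sub_distrib,
    ← Finset.sum_smul, hwv]
  abel

theorem Finset.norm_centerMass_sub_centerMass_le_s7 {s : Finset ι} (hs : s.Nonempty)
    {w w' : ι → ℝ} {v v' : ι → E} {V : ℝ} (hw : ∀ i ∈ s, 0 < w i) (hw' : ∀ i ∈ s, 0 < w' i)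
    (hv : ∀ i ∈ s, ‖v i‖ ≤ V) :
    ‖s.centerMass w v - s.centerMass w' v'‖ ≤
      (∑ i ∈ s, w' i)⁻¹ * ∑ i ∈ s, (2 * V * |w i - w' i| + w' i * ‖v i - v' i‖) := by
  have hW := Finset.sum_pos hw hs
  have hW' := Finset.sum_pos hw' hs
  have hc := Finset.norm_centerMass_le (fun i hi => (hw i hi).le) hW hv
  rw [s.centerMass_sub_centerMass v v' hW.ne' hW'.ne', norm_smul, Real.norm_of_nonneg
    (inv_nonneg.2 hW'.le)]
  gcongr
  refine (norm_sum_le _ _).trans (Finset.sum_le_sum fun i hi => (norm_add_le _ _).trans ?_)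
  rw [norm_smul, norm_smul, Real.norm_eq_abs, Real.norm_of_nonneg (hw' i hi).le, abs_sub_comm]
  have hcv : ‖s.centerMass w v - v i‖ ≤ 2 * V := by
    linarith [norm_sub_le (s.centerMass w v) (v i), hv i hi]
  nlinarith [abs_nonneg (w i - w' i)]

theorem Finset.sum_le_card_mul_add_card_mul {s t : Finset ι} {f : ι → ℝ} {a b : ℝ} (hb : 0 ≤ b)
    (hgood : ∀ i ∈ s, i ∉ t → f i ≤ a) (hbad : ∀ i ∈ s, f i ≤ a + b) :
    ∑ i ∈ s, f i ≤ #s * a + #t * b := by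
  classical
  calc ∑ i ∈ s, f i ≤ ∑ i ∈ s, (a + if i ∈ t then b else 0) := by
        refine Finset.sum_le_sum fun i hi => ?_
        split_ifs with hit
        exacts [hbad i hi, by simpa using hgood i hi hit]
    _ = #s * a + #(s.filter (· ∈ t)) * b := by
        rw [Finset.sum_add_distrib, ← Finset.sum_filter]
        simp only [Finset.sum_const, nsmul_eq_mul]
    _ ≤ #s * a + #t * b := by
        gcongr
        exact fun i hi => (Finset.mem_filter.1 hi).2

theorem Finset.dist_centerMass_le {s t : Finset ι} (hs : s.Nonempty) {w w' : ι → ℝ}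
    {v v' : ι → E} {m M V δw δv : ℝ} (hm : 0 < m) (hw : ∀ i ∈ s, w i ∈ Set.Ioc 0 M)
    (hw' : ∀ i ∈ s, w' i ∈ Set.Icc m M) (hv : ∀ i ∈ s, ‖v i‖ ≤ V) (hv' : ∀ i ∈ s, ‖v' i‖ ≤ V)
    (hδw : 0 ≤ δw) (hδv : 0 ≤ δv)
    (hgood : ∀ i ∈ s, i ∉ t → |w i - w' i| ≤ δw ∧ dist (v i) (v' i) ≤ δv) :
    dist (s.centerMass w v) (s.centerMass w' v') ≤
      (2 * V * δw + M * δv) / m + 4 * V * M * #t / (m * #s) := by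
  obtain ⟨i₀, hi₀⟩ := hs
  have hV : 0 ≤ V := (norm_nonneg _).trans (hv i₀ hi₀)
  have hM : 0 ≤ M := hm.le.trans ((hw' i₀ hi₀).1.trans (hw' i₀ hi₀).2)
  have hw'pos : ∀ i ∈ s, 0 < w' i := fun i hi => hm.trans_le (hw' i hi).1
  have hsum : ∑ i ∈ s, (2 * V * |w i - w' i| + w' i * ‖v i - v' i‖) ≤
      #s * (2 * V * δw + M * δv) + #t * (4 * V * M) := by
    refine Finset.sum_le_card_mul_add_card_mul (by positivity) (fun i hi hit => ?_) fun i hi => ?_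
    · obtain ⟨hdw, hdv⟩ := hgood i hi hit
      rw [dist_eq_norm] at hdv
      have := hw'pos i hi
      have := (hw' i hi).2
      nlinarith [norm_nonneg (v i - v' i)]
    · obtain ⟨⟨hwi, hwiM⟩, ⟨hmi, hwi'M⟩⟩ := And.intro (hw i hi) (hw' i hi)
      have hdw : |w i - w' i| ≤ M := abs_sub_le_iff.2 ⟨by linarith, by linarith⟩
      have hdv : ‖v i - v' i‖ ≤ 2 * V := by
        linarith [norm_sub_le (v i) (v' i), hv i hi, hv' i hi]
      have : 0 ≤ 2 * V * δw + M * δv := by positivity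
      nlinarith [abs_nonneg (w i - w' i), norm_nonneg (v i - v' i)]
  have hW' : m * #s ≤ ∑ i ∈ s, w' i := by
    simpa [mul_comm] using Finset.card_nsmul_le_sum s w' m fun i hi => (hw' i hi).1
  have hs : (0 : ℝ) < #s := by exact_mod_cast Finset.card_pos.2 ⟨i₀, hi₀⟩
  rw [dist_eq_norm]
  calc _ ≤ (∑ i ∈ s, w' i)⁻¹ * ∑ i ∈ s, (2 * V * |w i - w' i| + w' i * ‖v i - v' i‖) :=
        Finset.norm_centerMass_sub_centerMass_le_s7 ⟨i₀, hi₀⟩ (fun i hi => (hw i hi).1) hw'pos hv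
    _ ≤ (m * #s)⁻¹ * (#s * (2 * V * δw + M * δv) + #t * (4 * V * M)) := by
        gcongr
        exact Finset.sum_nonneg fun i hi => by
          have := hw'pos i hi
          positivity
    _ = (2 * V * δw + M * δv) / m + 4 * V * M * #t / (m * #s) := by
        field_simp

end CenterMass

theorem Fin.card_filter_val_add_one_lt_le {n : ℕ} {c : ℝ} (hc : 0 ≤ c) :
    (#{i : Fin n | (i : ℝ) + 1 < c} : ℝ) ≤ c := by
  have hcard : #{i : Fin n | (i : ℝ) + 1 < c} ≤ #(Finset.range ⌊c⌋₊) := by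
    refine Finset.card_le_card_of_injOn Fin.val (fun i hi => ?_) Fin.val_injective.injOn
    have hi : ((i + 1 : ℕ) : ℝ) ≤ c := by
      push_cast
      exact (Finset.mem_filter.1 (Finset.mem_coe.1 hi)).2.le
    rw [Finset.mem_coe, Finset.mem_range]
    exact Nat.le_floor hi
  calc _ ≤ (⌊c⌋₊ : ℝ) := by simpa using hcard
    _ ≤ c := Nat.floor_le hc

/-- Closeness at `j` itself is required: the query `x j` enters every attention weight at
position `j`, and the layer output there also depends on `x j` directly. -/
def PrefixClose {X : Type*} [PseudoMetricSpace X] {n : ℕ} (η θ : ℝ) (x x' : Fin n → X)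
    (j : Fin n) : Prop :=
  dist (x j) (x' j) ≤ η ∧ (#{i ∈ Finset.Iic j | η < dist (x i) (x' i)} : ℝ) ≤ θ * (j + 1)

theorem PrefixClose.mono_left {X : Type*} [PseudoMetricSpace X] {n : ℕ} {η η' θ : ℝ}
    {x x' : Fin n → X} {j : Fin n} (h : PrefixClose η θ x x' j) (hη : η ≤ η') :
    PrefixClose η' θ x x' j := by
  refine ⟨h.1.trans hη, le_trans ?_ h.2⟩
  gcongr

/-- Positions `i ≤ j` with `θ₁ (i + 1) < θ (j + 1)` may become far apart; they form an initial
segment of relative length at most `θ / θ₁`. -/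
theorem PrefixClose.of_forall_le {X Y : Type*} [PseudoMetricSpace X] [PseudoMetricSpace Y]
    {n : ℕ} {η η' θ θ₁ θ' : ℝ} {x x' : Fin n → X} {y y' : Fin n → Y} {j : Fin n}
    (h : PrefixClose η θ x x' j) (hθ₁ : 0 < θ₁) (hθθ₁ : θ ≤ θ₁) (hθ' : θ * (1 + θ₁⁻¹) ≤ θ')
    (hxy : ∀ i ≤ j, PrefixClose η θ₁ x x' i → dist (y i) (y' i) ≤ η') :
    PrefixClose η' θ' y y' j := by
  obtain ⟨hj, hcount⟩ := h
  have hθ : 0 ≤ θ := nonneg_of_mul_nonneg_left ((Nat.cast_nonneg _).trans hcount) (by positivity)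
  set c : ℝ := θ * (j + 1) / θ₁
  have hgood : ∀ i ≤ j, c ≤ (i : ℝ) + 1 → dist (x i) (x' i) ≤ η → dist (y i) (y' i) ≤ η' := by
    intro i hij hci hi
    refine hxy i hij ⟨hi, ?_⟩
    calc (#{k ∈ Finset.Iic i | η < dist (x k) (x' k)} : ℝ)
        ≤ #{k ∈ Finset.Iic j | η < dist (x k) (x' k)} := by
          gcongr
      _ ≤ θ₁ * c := by rwa [mul_div_cancel₀ _ hθ₁.ne']
      _ ≤ θ₁ * (i + 1) := by gcongr
  have hsub : {i ∈ Finset.Iic j | η' < dist (y i) (y' i)} ⊆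
      {i ∈ Finset.Iic j | η < dist (x i) (x' i)} ∪ ({i | (i : ℝ) + 1 < c} : Finset (Fin n)) := by
    intro i hi
    obtain ⟨hij, hfar⟩ := Finset.mem_filter.1 hi
    by_contra hnot
    simp only [Finset.mem_union, Finset.mem_filter, hij, Finset.mem_univ, true_and, not_or,
      not_lt] at hnot
    exact hfar.not_ge (hgood i (Finset.mem_Iic.1 hij) hnot.2 hnot.1)
  refine ⟨hxy j le_rfl ⟨hj, hcount.trans (by gcongr)⟩, ?_⟩
  calc (#{i ∈ Finset.Iic j | η' < dist (y i) (y' i)} : ℝ)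
      ≤ #{i ∈ Finset.Iic j | η < dist (x i) (x' i)} + #{i : Fin n | (i : ℝ) + 1 < c} := by
        exact_mod_cast (Finset.card_le_card hsub).trans (Finset.card_union_le _ _)
    _ ≤ θ * (j + 1) + c := add_le_add hcount (Fin.card_filter_val_add_one_lt_le (by positivity))
    _ = θ * (1 + θ₁⁻¹) * (j + 1) := by ring
    _ ≤ θ' * (j + 1) := by gcongr

theorem prefixClose_last_of_relHamming_le {A X : Type*} [PseudoMetricSpace X] (e : A → ℕ → X)
    {n : ℕ} {a b : Fin (n + 1) → A} {η θ : ℝ} (hη : 0 ≤ η) (hlast : a (Fin.last n) = b (Fin.last n))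
    (hab : relHamming a b ≤ θ) :
    PrefixClose η θ (fun j => e (a j) j) (fun j => e (b j) j) (Fin.last n) := by
  classical
  refine ⟨by simp [hlast, hη], ?_⟩
  have hsub : {i ∈ Finset.Iic (Fin.last n) | η < dist (e (a i) i) (e (b i) i)} ⊆
      ({i | a i ≠ b i} : Finset (Fin (n + 1))) := by
    intro i hi
    simp only [Finset.mem_filter, Finset.mem_univ, true_and] at hi ⊢
    rintro hab
    simp [hab, hη.not_gt] at hi
  rw [relHamming, div_le_iff₀ (by positivity)] at hab
  calc _ ≤ (#{i | a i ≠ b i} : ℝ) := by exact_mod_cast Finset.card_le_card hsub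
    _ ≤ θ * (Fin.last n + 1) := by simpa using hab

namespace AttentionLayer

variable {d : ℕ} (L : AttentionLayer d)

theorem attn_eq_centerMass {n : ℕ} (x : Fin n → Fin d → ℝ) (j : Fin n) :
    L.attn x j = (Finset.Iic j).centerMass (fun i => L.w (x i) (x j) (L.p i j))
      (fun i => L.val (x i)) := rfl

theorem norm_attn_le {n : ℕ} {x : Fin n → Fin d → ℝ} {V : ℝ} (hV : ∀ i, ‖L.val (x i)‖ ≤ V)
    (j : Fin n) : ‖L.attn x j‖ ≤ V := by
  rw [attn_eq_centerMass]
  exact Finset.norm_centerMass_le (fun i _ => (L.w_pos _ _ _).le)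
    (Finset.sum_pos (fun i _ => L.w_pos _ _ _) ⟨j, Finset.mem_Iic.2 le_rfl⟩) fun i _ => hV i

theorem exists_isCompact_mapsTo {K : Set (Fin d → ℝ)} (hK : IsCompact K) :
    ∃ K' : Set (Fin d → ℝ), IsCompact K' ∧
      ∀ (n : ℕ) (x : Fin n → Fin d → ℝ), (∀ i, x i ∈ K) → ∀ j, L.apply x j ∈ K' := by
  obtain ⟨V, hV⟩ := hK.exists_bound_of_continuousOn L.val_cont.continuousOn
  exact ⟨_, ((isCompact_closedBall 0 V).prod hK).image L.F_cont, fun n x hx j =>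
    ⟨(L.attn x j, x j), ⟨mem_closedBall_zero_iff.2 (L.norm_attn_le (fun i => hV _ (hx i)) j),
      hx j⟩, rfl⟩⟩

theorem exists_dist_attn_le (hL : L.CompactPE) {K : Set (Fin d → ℝ)} (hK : IsCompact K)
    {ε : ℝ} (hε : 0 < ε) :
    ∃ η > 0, ∃ θ > 0, ∀ (n : ℕ) (x x' : Fin n → Fin d → ℝ), (∀ i, x i ∈ K) → (∀ i, x' i ∈ K) →
      ∀ j, PrefixClose η θ x x' j → dist (L.attn x j) (L.attn x' j) ≤ ε := by
  obtain ⟨P, hP, hLP⟩ := hL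
  have hC : IsCompact (K ×ˢ K ×ˢ P) := hK.prod (hK.prod hP)
  obtain ⟨V, hVpos, hV⟩ := hK.exists_pos_forall_norm_le L.val_cont.continuousOn
  obtain ⟨M, hMpos, hM⟩ := hC.exists_pos_forall_norm_le L.w_cont.continuousOn
  obtain ⟨m, hm, hwm⟩ := hC.exists_forall_le' L.w_cont.continuousOn fun t _ => L.w_pos _ _ _
  obtain ⟨ηw, hηw, hw⟩ := Metric.uniformContinuousOn_iff_le.1
    (hC.uniformContinuousOn_of_continuous L.w_cont.continuousOn) (m * ε / (8 * V))
    (by positivity)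
  obtain ⟨ηv, hηv, hv⟩ := Metric.uniformContinuousOn_iff_le.1
    (hK.uniformContinuousOn_of_continuous L.val_cont.continuousOn) (m * ε / (4 * M))
    (by positivity)
  -- each of the two error terms of `Finset.dist_centerMass_le` is then at most `ε / 2`
  refine ⟨min ηw ηv, by positivity, m * ε / (8 * V * M), by positivity, ?_⟩
  rintro n x x' hx hx' j ⟨hj, hcount⟩
  have hmem : ∀ (x : Fin n → Fin d → ℝ), (∀ i, x i ∈ K) → ∀ i : Fin n,
      (x i, x j, L.p i j) ∈ K ×ˢ K ×ˢ P := fun x hx i => ⟨hx i, hx j, hLP _ _⟩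
  have hwM : ∀ (x : Fin n → Fin d → ℝ), (∀ i, x i ∈ K) → ∀ i : Fin n,
      L.w (x i) (x j) (L.p i j) ≤ M := fun x hx i => (le_abs_self _).trans (hM _ (hmem x hx i))
  rw [attn_eq_centerMass, attn_eq_centerMass]
  refine (Finset.dist_centerMass_le (δw := m * ε / (8 * V)) (δv := m * ε / (4 * M))
    (t := {i ∈ Finset.Iic j | min ηw ηv < dist (x i) (x' i)}) ⟨j, Finset.mem_Iic.2 le_rfl⟩ hm
    (fun i _ => ⟨L.w_pos _ _ _, hwM x hx i⟩) (fun i _ => ⟨hwm _ (hmem x' hx' i), hwM x' hx' i⟩)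
    (fun i _ => hV _ (hx i)) (fun i _ => hV _ (hx' i)) (by positivity) (by positivity)
    fun i hi hit => ?_).trans ?_
  · have hi : dist (x i) (x' i) ≤ min ηw ηv :=
      not_lt.1 fun hfar => hit (Finset.mem_filter.2 ⟨hi, hfar⟩)
    refine ⟨?_, hv _ (hx i) _ (hx' i) (hi.trans (min_le_right _ _))⟩
    rw [← Real.dist_eq]
    refine hw _ (hmem x hx i) _ (hmem x' hx' i) ?_
    simp only [Prod.dist_eq, dist_self]
    exact max_le (hi.trans (min_le_left _ _)) (max_le (hj.trans (min_le_left _ _)) hηw.le)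
  · rw [Fin.card_Iic]
    have hbad : 4 * V * M * #{i ∈ Finset.Iic j | min ηw ηv < dist (x i) (x' i)} /
        (m * ↑(↑j + 1 : ℕ)) ≤ ε / 2 := by
      rw [div_le_iff₀ (by positivity)]
      calc _ ≤ 4 * V * M * (m * ε / (8 * V * M) * (j + 1)) := by gcongr
        _ = ε / 2 * (m * ↑(↑j + 1 : ℕ)) := by
          push_cast
          field_simp
          ring
    have hgood : (2 * V * (m * ε / (8 * V)) + M * (m * ε / (4 * M))) / m = ε / 2 := by
      field_simp
      ring
    linarith

theorem exists_dist_apply_le (hL : L.CompactPE) {K : Set (Fin d → ℝ)} (hK : IsCompact K)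
    {ε : ℝ} (hε : 0 < ε) :
    ∃ η > 0, ∃ θ > 0, ∀ (n : ℕ) (x x' : Fin n → Fin d → ℝ), (∀ i, x i ∈ K) → (∀ i, x' i ∈ K) →
      ∀ j, PrefixClose η θ x x' j → dist (L.apply x j) (L.apply x' j) ≤ ε := by
  obtain ⟨V, hV⟩ := hK.exists_bound_of_continuousOn L.val_cont.continuousOn
  obtain ⟨ηF, hηF, hF⟩ := Metric.uniformContinuousOn_iff_le.1
    (((isCompact_closedBall 0 V).prod hK).uniformContinuousOn_of_continuous
      L.F_cont.continuousOn) ε hε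
  obtain ⟨η, hη, θ, hθ, hattn⟩ := L.exists_dist_attn_le hL hK hηF
  refine ⟨min η ηF, by positivity, θ, hθ, fun n x x' hx hx' j hj => ?_⟩
  have hmem : ∀ (x : Fin n → Fin d → ℝ), (∀ i, x i ∈ K) →
      (L.attn x j, x j) ∈ Metric.closedBall 0 V ×ˢ K := fun x hx =>
    ⟨mem_closedBall_zero_iff.2 (L.norm_attn_le (fun i => hV _ (hx i)) j), hx j⟩
  refine hF _ (hmem x hx) (L.attn x' j, x' j) (hmem x' hx') ?_
  rw [Prod.dist_eq]
  exact max_le (hattn n x x' hx hx' j (hj.mono_left (min_le_left _ _)))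
    (hj.1.trans (min_le_right _ _))

end AttentionLayer

theorem exists_isCompact_mapsTo_applyLayers {d : ℕ} (Ls : List (AttentionLayer d))
    {K : Set (Fin d → ℝ)} (hK : IsCompact K) :
    ∃ K' : Set (Fin d → ℝ), IsCompact K' ∧
      ∀ (n : ℕ) (x : Fin n → Fin d → ℝ), (∀ i, x i ∈ K) → ∀ j, applyLayers Ls x j ∈ K' := by
  induction Ls generalizing K with
  | nil => exact ⟨K, hK, fun n x hx => hx⟩
  | cons L Ls ih =>
    obtain ⟨K₁, hK₁, hL⟩ := L.exists_isCompact_mapsTo hK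
    obtain ⟨K₂, hK₂, hLs⟩ := ih hK₁
    exact ⟨K₂, hK₂, fun n x hx => hLs n (L.apply x) (hL n x hx)⟩

theorem exists_dist_applyLayers_le {d : ℕ} (Ls : List (AttentionLayer d))
    (hLs : ∀ L ∈ Ls, L.CompactPE) {K : Set (Fin d → ℝ)} (hK : IsCompact K) {ε : ℝ} (hε : 0 < ε) :
    ∃ η > 0, ∃ θ > 0, ∀ (n : ℕ) (x x' : Fin n → Fin d → ℝ), (∀ i, x i ∈ K) → (∀ i, x' i ∈ K) →
      ∀ j, PrefixClose η θ x x' j → dist (applyLayers Ls x j) (applyLayers Ls x' j) ≤ ε := by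
  induction Ls generalizing K with
  | nil => exact ⟨ε, hε, 1, one_pos, fun n x x' _ _ j hj => hj.1⟩
  | cons L Ls ih =>
    obtain ⟨K₁, hK₁, hmaps⟩ := L.exists_isCompact_mapsTo hK
    obtain ⟨η', hη', θ', hθ', hLs'⟩ := ih (fun L' hL' => hLs L' (List.mem_cons_of_mem _ hL')) hK₁
    obtain ⟨η, hη, θ₁, hθ₁, hL⟩ := L.exists_dist_apply_le (hLs L List.mem_cons_self) hK hη'
    refine ⟨η, hη, min θ₁ (θ' / (1 + θ₁⁻¹)), by positivity, fun n x x' hx hx' j hj => ?_⟩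
    refine hLs' n _ _ (hmaps n x hx) (hmaps n x' hx') j (hj.of_forall_le hθ₁ (min_le_left _ _)
      ?_ fun i _ hi => hL n x x' hx hx' i hi)
    exact (le_div_iff₀ (by positivity)).1 (min_le_right _ _)

/-- **Representational collapse.** If `T` eventually learns `α`, then there exist `δ > 0`
and `n₀` such that for every `n ≥ n₀` and every length-`n` sequence `β` with the same last
token as the length-`n` prefix of `α` and relative Hamming distance at most `δ` from it,
the next token of `α` is the unique maximizer of `T(β)`. -/
theorem representational_collapse {A : Type*} [Fintype A] {d : ℕ} (T : Transformer A d)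
    (hT : T.IsCompactT) (α : ℕ → A) (hα : EventuallyLearns T α) :
    ∃ δ : ℝ, 0 < δ ∧ ∃ n₀ : ℕ, ∀ n ≥ n₀, ∀ β : Fin (n + 1) → A,
      β (Fin.last n) = α (n + 1) →
      relHamming (fun i : Fin (n + 1) => α (i.val + 1)) β ≤ δ →
      ∀ σ : A, σ ≠ α (n + 2) → T.eval β σ < T.eval β (α (n + 2)) := by
  obtain ⟨⟨K, hK, hembed⟩, hPE⟩ := hT
  obtain ⟨ε, hε, n₀, hlearn⟩ := hα
  obtain ⟨K', hK', hmaps⟩ := exists_isCompact_mapsTo_applyLayers T.layers hK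
  obtain ⟨ηP, hηP, hproj⟩ := Metric.uniformContinuousOn_iff_le.1
    (hK'.uniformContinuousOn_of_continuous T.proj_cont.continuousOn) (ε / 3) (by positivity)
  obtain ⟨η, hη, θ, hθ, hlayers⟩ := exists_dist_applyLayers_le T.layers hPE hK hηP
  refine ⟨θ, hθ, n₀, fun n hn β hlast hβ σ hσ => ?_⟩
  have hclose : dist (T.eval (fun i : Fin (n + 1) => α (i.val + 1))) (T.eval β) ≤ ε / 3 :=
    hproj _ (hmaps _ _ (fun _ => hembed _ _) _) _ (hmaps _ _ (fun _ => hembed _ _) _)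
      (hlayers _ _ _ (fun _ => hembed _ _) (fun _ => hembed _ _) _
        (prefixClose_last_of_relHamming_le T.embed hη.le hlast.symm hβ))
  have hσ' := (dist_le_pi_dist _ _ σ).trans hclose
  have hnext := (dist_le_pi_dist _ _ (α (n + 2))).trans hclose
  rw [Real.dist_eq, abs_le] at hσ' hnext
  linarith [hlearn n hn σ hσ]
end
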